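/- For every natural number i, the depth-bounded sublattice L_i = { l ∈ L : D(l) ≤ i } of the symbolic lattice satisfies the ascending chain condition: there is no sequence c : ℕ → L such that for every n, D(c n) ≤ i, c n ⊑ c (n+1), and c n ≠ c (n+1). Equivalently, every ⊑-increasing sequence of elements of depth at most i is eventually constant. -/

import Mathlib

inductive SymExpr (P U B F : Type*) where
  | bot : SymExpr P U B F
  | top : SymExpr P U B F
  | prim : P → SymExpr P U B F
  | unop : U → SymExpr P U B F → SymExpr P U B F
  | binop : B → SymExpr P U B F → SymExpr P U B F → SymExpr P U B F
  | fn : F → List (SymExpr P U B F) → SymExpr P U B F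
  | phi : List (SymExpr P U B F) → SymExpr P U B F

namespace SymExpr

variable {P U B F : Type*}

/-- The partial order `⊑` on the symbolic lattice. -/
inductive Le : SymExpr P U B F → SymExpr P U B F → Prop where
  | bot (l) : Le .bot l
  | top (l) : Le l .top
  | prim (p : P) : Le (.prim p) (.prim p)
  | unop {l l'} (u : U) : Le l l' → Le (.unop u l) (.unop u l')
  | binop {l₁ l₂ l₁' l₂'} (b : B) : Le l₁ l₁' → Le l₂ l₂' →
      Le (.binop b l₁ l₂) (.binop b l₁' l₂')
  | fn {ls ls'} (f : F) : List.Forall₂ Le ls ls' → Le (.fn f ls) (.fn f ls')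
  | phi {ls ls'} : List.Forall₂ Le ls ls' → Le (.phi ls) (.phi ls')

attribute [local instance] Classical.propDecidable

mutual
noncomputable def join : SymExpr P U B F → SymExpr P U B F → SymExpr P U B F
  | .bot, l => l
  | l, .bot => l
  | .prim p, .prim p' => if p = p' then .prim p else .top
  | .unop u l, .unop u' l' => if u = u' then .unop u (join l l') else .top
  | .binop b l₁ l₂, .binop b' l₁' l₂' =>
      if b = b' then .binop b (join l₁ l₁') (join l₂ l₂') else .top
  | .fn f ls, .fn f' ls' =>
      if f = f' ∧ ls.length = ls'.length then .fn f (joinList ls ls') else .top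
  | .phi ls, .phi ls' =>
      if ls.length = ls'.length then .phi (joinList ls ls') else .top
  | _, _ => .top

noncomputable def joinList : List (SymExpr P U B F) → List (SymExpr P U B F) → List (SymExpr P U B F)
  | l :: ls, l' :: ls' => join l l' :: joinList ls ls'
  | _, _ => []
end

mutual
noncomputable def meet : SymExpr P U B F → SymExpr P U B F → SymExpr P U B F
  | .top, l => l
  | l, .top => l
  | .prim p, .prim p' => if p = p' then .prim p else .bot
  | .unop u l, .unop u' l' => if u = u' then .unop u (meet l l') else .bot
  | .binop b l₁ l₂, .binop b' l₁' l₂' =>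
      if b = b' then .binop b (meet l₁ l₁') (meet l₂ l₂') else .bot
  | .fn f ls, .fn f' ls' =>
      if f = f' ∧ ls.length = ls'.length then .fn f (meetList ls ls') else .bot
  | .phi ls, .phi ls' =>
      if ls.length = ls'.length then .phi (meetList ls ls') else .bot
  | _, _ => .bot

noncomputable def meetList : List (SymExpr P U B F) → List (SymExpr P U B F) → List (SymExpr P U B F)
  | l :: ls, l' :: ls' => meet l l' :: meetList ls ls'
  | _, _ => []
end

mutual
def depth : SymExpr P U B F → ℕ
  | .bot => 0
  | .top => 0
  | .prim _ => 0
  | .unop _ l => 1 + depth l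
  | .binop _ l₁ l₂ => 1 + max (depth l₁) (depth l₂)
  | .fn _ ls => 1 + depthList ls
  | .phi ls => 1 + depthList ls

def depthList : List (SymExpr P U B F) → ℕ
  | [] => 0
  | l :: ls => max (depth l) (depthList ls)
end

/-- The widening truncation `T_i`. -/
def trunc : ℕ → SymExpr P U B F → SymExpr P U B F
  | _, .bot => .bot
  | _, .top => .top
  | _, .prim p => .prim p
  | 0, .unop _ _ => .top
  | 0, .binop _ _ _ => .top
  | 0, .fn _ _ => .top
  | 0, .phi _ => .top
  | i + 1, .unop u l => .unop u (trunc i l)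
  | i + 1, .binop b l₁ l₂ => .binop b (trunc i l₁) (trunc i l₂)
  | i + 1, .fn f ls => .fn f (ls.map (fun l => trunc i l))
  | i + 1, .phi ls => .phi (ls.map (fun l => trunc i l))

end SymExpr

/-!
Once an ascending chain leaves `⊥` it either reaches `⊤`, where it stays, or it keeps the head
constructor (and the arity) of its first non-`⊥` term, so that from then on it is determined by the
componentwise ascending chain of its lists of children. The children have smaller depth, and a
componentwise ascending chain of lists of fixed length is eventually constant as soon as each
coordinate is, so induction on the depth bound shows that every ascending chain is eventually
constant.
-/

open Filter

theorem Filter.eventuallyConst_comp_add_atTop_iff {α : Type*} {f : ℕ → α} (k : ℕ) :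
    EventuallyConst (fun n => f (n + k)) atTop ↔ EventuallyConst f atTop := by
  change (map (f ∘ (· + k)) atTop).Subsingleton ↔ _
  rw [← map_map, map_add_atTop_eq_nat]
  rfl

theorem List.eventuallyConst_of_forall₂_chain {α : Type*} {R : α → α → Prop} {S : α → Prop}
    (hR : ∀ c : ℕ → α, (∀ n, S (c n)) → (∀ n, R (c n) (c (n + 1))) → EventuallyConst c atTop)
    {L : ℕ → List α} (hS : ∀ n, ∀ x ∈ L n, S x) (hL : ∀ n, Forall₂ R (L n) (L (n + 1))) :
    EventuallyConst L atTop := by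
  have hlen : ∀ n, (L n).length = (L 0).length := fun n => by
    induction n with
    | zero => rfl
    | succ n ih => rw [← (hL n).length_eq, ih]
  induction h : (L 0).length generalizing L with
  | zero =>
    have hnil : L = fun _ => [] := funext fun n => List.eq_nil_of_length_eq_zero ((hlen n).trans h)
    exact hnil ▸ EventuallyConst.const _
  | succ k ih =>
    choose a t hat using fun n => List.exists_of_length_succ (L n) ((hlen n).trans h)
    have hstep : ∀ n, R (a n) (a (n + 1)) ∧ Forall₂ R (t n) (t (n + 1)) := fun n => by
      simpa only [hat, List.forall₂_cons] using hL n
    have ha : EventuallyConst a atTop :=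
      hR a (fun n => hS n _ (by simp [hat n])) (fun n => (hstep n).1)
    have ht : EventuallyConst t atTop :=
      ih (fun n x hx => hS n x (by simp [hat n, hx])) (fun n => (hstep n).2)
        (fun n => by simpa [hat] using hlen n) (by simpa [hat] using h)
    rw [show L = fun n => a n :: t n from funext hat]
    exact ha.comp₂ List.cons ht

namespace SymExpr

variable {P U B F : Type*}

def children : SymExpr P U B F → List (SymExpr P U B F)
  | .unop _ l => [l]
  | .binop _ l₁ l₂ => [l₁, l₂]
  | .fn _ ls => ls
  | .phi ls => ls
  | _ => []

theorem depth_le_depthList_of_mem {x : SymExpr P U B F} {ls : List (SymExpr P U B F)}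
    (hx : x ∈ ls) : x.depth ≤ depthList ls := by
  induction ls with
  | nil => cases hx
  | cons l ls ih =>
    rw [depthList]
    rcases List.mem_cons.1 hx with rfl | hx
    · exact le_max_left _ _
    · exact (ih hx).trans (le_max_right _ _)

theorem depth_lt_of_mem_children {x l : SymExpr P U B F} (hx : x ∈ l.children) :
    x.depth < l.depth := by
  cases l with
  | unop _ y =>
    obtain rfl : x = y := List.mem_singleton.1 hx
    simp only [depth]
    omega
  | binop _ y₁ y₂ =>
    rcases List.mem_pair.1 hx with rfl | rfl <;> simp only [depth] <;> omega
  | fn _ ls | phi ls =>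
    have : x.depth ≤ depthList ls := depth_le_depthList_of_mem hx
    simp only [depth]
    omega
  | _ => cases hx

theorem Le.eq_top {l : SymExpr P U B F} (h : Le .top l) : l = .top := by
  cases h
  rfl

theorem Le.eq_bot {l : SymExpr P U B F} (h : Le l .bot) : l = .bot := by
  cases h
  rfl

theorem Le.forall₂_children {l l' : SymExpr P U B F} (h : l.Le l') (hl : l ≠ .bot)
    (hl' : l' ≠ .top) : List.Forall₂ Le l.children l'.children := by
  cases h <;> simp_all [children]

theorem Le.eq_of_children_eq {l l' : SymExpr P U B F} (h : l.Le l') (hl : l ≠ .bot)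
    (hl' : l' ≠ .top) (he : l.children = l'.children) : l = l' := by
  cases h <;> simp_all [children]

theorem eq_top_of_le_chain {c : ℕ → SymExpr P U B F} (hc : ∀ n, (c n).Le (c (n + 1)))
    {n m : ℕ} (hn : c n = .top) (hm : n ≤ m) : c m = .top :=
  Nat.le_induction hn (fun k _ ih => Le.eq_top (ih ▸ hc k)) m hm

theorem ne_bot_of_le_chain {c : ℕ → SymExpr P U B F} (hc : ∀ n, (c n).Le (c (n + 1)))
    {n m : ℕ} (hn : c n ≠ .bot) (hm : n ≤ m) : c m ≠ .bot :=
  Nat.le_induction hn (fun k _ ih h => ih (Le.eq_bot (h ▸ hc k))) m hm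

theorem eventuallyConst_of_le_chain_of_depth_lt (d : ℕ) {c : ℕ → SymExpr P U B F}
    (hd : ∀ n, (c n).depth < d) (hc : ∀ n, (c n).Le (c (n + 1))) : EventuallyConst c atTop := by
  induction d generalizing c with
  | zero => exact absurd (hd 0) (Nat.not_lt_zero _)
  | succ d ih =>
    by_cases htop : ∃ n, c n = .top
    · obtain ⟨n, hn⟩ := htop
      refine eventuallyConst_atTop.2 ⟨n, fun m hm => ?_⟩
      rw [hn, eq_top_of_le_chain hc hn hm]
    by_cases hbot : ∀ n, c n = .bot
    · exact eventuallyConst_atTop.2 ⟨0, fun m _ => by rw [hbot m, hbot 0]⟩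
    push Not at htop hbot
    obtain ⟨n₀, hn₀⟩ := hbot
    have hne : ∀ m, n₀ ≤ m → c m ≠ .bot := fun m => ne_bot_of_le_chain hc hn₀
    have hchildren : EventuallyConst (fun m => (c m).children) atTop := by
      rw [← eventuallyConst_comp_add_atTop_iff n₀]
      refine List.eventuallyConst_of_forall₂_chain (S := fun x => x.depth < d)
        (fun _ => ih) (fun m x hx => ?_) (fun m => ?_)
      · exact Nat.lt_of_lt_of_le (depth_lt_of_mem_children hx) (Nat.le_of_lt_succ (hd _))
      · rw [Nat.add_right_comm]
        exact (hc _).forall₂_children (hne (m + n₀) (by omega)) (htop _)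
    obtain ⟨N, hN⟩ := eventuallyConst_atTop_nat.1 hchildren
    refine eventuallyConst_atTop_nat.2 ⟨max N n₀, fun m hm => ?_⟩
    exact ((hc m).eq_of_children_eq (hne m (le_of_max_le_right hm)) (htop _)
      (hN m (le_of_max_le_left hm)).symm).symm

end SymExpr

/-- each depth-bounded sublattice satisfies the ascending chain
condition: there is no strictly ascending chain of elements of depth at most `i`. -/
theorem SymExpr.acc_depth_bounded {P U B F : Type*} (i : ℕ) :
    ¬ ∃ c : ℕ → SymExpr P U B F,
        ∀ n : ℕ, (c n).depth ≤ i ∧ (c n).Le (c (n + 1)) ∧ c n ≠ c (n + 1) := by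
  rintro ⟨c, hc⟩
  obtain ⟨N, hN⟩ := eventuallyConst_atTop_nat.1 <|
    eventuallyConst_of_le_chain_of_depth_lt (i + 1) (fun n => Nat.lt_succ_of_le (hc n).1)
      (fun n => (hc n).2.1)
  exact (hc N).2.2 (hN N le_rfl).symm
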